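/- Let H be a k-uniform hypergraph with n vertices and m ≥ 1 hyperedges. Then s_Q(H) ≥ (n·(d_max + 1/(k-1)) − km)/(n−1), where d_max is the maximum degree and s_Q(H) is the signless Laplacian spread. -/

import Mathlib

open Finset

/-- The set of hyperedges containing both `i` and `j`. -/
def edgesBetween {n : ℕ} (E : Finset (Finset (Fin n))) (i j : Fin n) :
    Finset (Finset (Fin n)) :=
  E.filter fun e => i ∈ e ∧ j ∈ e

/-- The degree of vertex `i`: the number of hyperedges containing `i`. -/
def hdeg {n : ℕ} (E : Finset (Finset (Fin n))) (i : Fin n) : ℕ :=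
  (E.filter fun e => i ∈ e).card

/-- Two (distinct) vertices are adjacent if some hyperedge contains both. -/
def Adj {n : ℕ} (E : Finset (Finset (Fin n))) (i j : Fin n) : Prop :=
  i ≠ j ∧ ∃ e ∈ E, i ∈ e ∧ j ∈ e

/-- The neighbours of a vertex. -/
noncomputable def neighbors {n : ℕ} (E : Finset (Finset (Fin n))) (i : Fin n) :
    Finset (Fin n) :=
  @Finset.filter _ (fun j => Adj E i j) (Classical.decPred _) Finset.univ

/-- Banerjee's adjacency matrix of a hypergraph: `A i j = ∑_{e ∋ i,j} 1/(|e|-1)`. -/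
noncomputable def adjMat {n : ℕ} (E : Finset (Finset (Fin n))) :
    Matrix (Fin n) (Fin n) ℝ :=
  Matrix.of fun i j =>
    if i = j then 0 else ∑ e ∈ edgesBetween E i j, 1 / ((e.card : ℝ) - 1)

/-- The signless Laplacian matrix `Q = D + A`. -/
noncomputable def signlessLap {n : ℕ} (E : Finset (Finset (Fin n))) :
    Matrix (Fin n) (Fin n) ℝ :=
  Matrix.diagonal (fun i => (hdeg E i : ℝ)) + adjMat E

/-- Largest eigenvalue of a real matrix. -/
noncomputable def qmax {n : ℕ} (M : Matrix (Fin n) (Fin n) ℝ) : ℝ :=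
  sSup (spectrum ℝ M)

/-- Smallest eigenvalue of a real matrix. -/
noncomputable def qmin {n : ℕ} (M : Matrix (Fin n) (Fin n) ℝ) : ℝ :=
  sInf (spectrum ℝ M)

/-- A hypergraph is `k`-uniform if every hyperedge has exactly `k` vertices. -/
def IsUniform {n : ℕ} (k : ℕ) (E : Finset (Finset (Fin n))) : Prop :=
  ∀ e ∈ E, e.card = k

/-- A hypergraph is connected if any two vertices are joined by a walk. -/
def Conn {n : ℕ} (E : Finset (Finset (Fin n))) : Prop :=
  ∀ i j : Fin n, Relation.ReflTransGen (Adj E) i j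

/-!
Since `tr Q = ∑ᵢ dᵢ = k m`, the eigenvalues of `Q` other than `q₁` are at least `qₙ` and sum to
`k m - q₁`, whence `n q₁ - k m ≤ (n - 1)(q₁ - qₙ)`. For the lower bound on `q₁`, write
`xᵀ Q x = ½ ∑ᵢⱼ Aᵢⱼ (xᵢ + xⱼ)²` and test it on `x = c eᵤ + 𝟙_{N(u)}`, where `u` has maximum degree
`d`, `N(u)` is its neighbourhood and `c = d (k - 1) ≥ |N(u)|`: the terms through `u` alone give
`xᵀ Q x ≥ d (c + 1)²` while `xᵀ x ≤ c (c + 1)`, so `q₁ ≥ d (c + 1) / c = d + 1 / (k - 1)`.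
-/

open Finset Matrix
open scoped MatrixOrder

lemma two_mul_sum_row_le_sum_sum {ι : Type*} [Fintype ι] [DecidableEq ι] {f : ι → ι → ℝ}
    (hf : ∀ i j, 0 ≤ f i j) (hsymm : ∀ i j, f i j = f j i) {u : ι} (hu : f u u = 0) :
    2 * ∑ j, f u j ≤ ∑ i, ∑ j, f i j := by
  have hcol : ∑ i ∈ univ.erase u, f i u ≤ ∑ i ∈ univ.erase u, ∑ j, f i j :=
    sum_le_sum fun i _ => single_le_sum (fun j _ => hf i j) (mem_univ u)
  rw [sum_erase (f := fun i => f i u) univ hu] at hcol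
  have hrow : ∑ i, f i u = ∑ j, f u j := sum_congr rfl fun i _ => hsymm i u
  rw [← add_sum_erase univ (fun i => ∑ j, f i j) (mem_univ u)]
  linarith

lemma card_mul_iSup_sub_sum_le {ι : Type*} [Fintype ι] [Nonempty ι] (f : ι → ℝ) :
    Fintype.card ι * (⨆ i, f i) - ∑ i, f i ≤ (Fintype.card ι - 1) * ((⨆ i, f i) - ⨅ i, f i) := by
  classical
  obtain ⟨i₀, hi₀⟩ := exists_eq_ciSup_of_finite (f := f)
  have hrest : ∑ _i ∈ univ.erase i₀, (⨅ i, f i) ≤ ∑ i ∈ univ.erase i₀, f i :=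
    sum_le_sum fun i _ => ciInf_le (Set.finite_range f).bddBelow i
  rw [sum_const, card_erase_of_mem (mem_univ i₀), card_univ, nsmul_eq_mul,
    Nat.cast_pred Fintype.card_pos] at hrest
  rw [← add_sum_erase _ _ (mem_univ i₀), hi₀]
  linarith

section Spectrum

variable {ι : Type*} [Fintype ι] [DecidableEq ι] {A : Matrix ι ι ℝ}

lemma Matrix.IsHermitian.dotProduct_mulVec_le_of_spectrum_le (hA : A.IsHermitian) {c : ℝ}
    (h : ∀ μ ∈ spectrum ℝ A, μ ≤ c) (x : ι → ℝ) : x ⬝ᵥ A *ᵥ x ≤ c * (x ⬝ᵥ x) := by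
  have hle : A ≤ algebraMap ℝ _ c := le_algebraMap_of_spectrum_le h hA.isSelfAdjoint
  have := (Matrix.le_iff.1 hle).dotProduct_mulVec_nonneg x
  simpa only [star_trivial, Algebra.algebraMap_eq_smul_one, sub_mulVec, smul_mulVec, one_mulVec,
    dotProduct_sub, dotProduct_smul, smul_eq_mul, sub_nonneg] using this

lemma Matrix.IsSymm.two_mul_dotProduct_diagonal_add_mulVec (hA : A.IsSymm) (x : ι → ℝ) :
    2 * (x ⬝ᵥ (diagonal (fun i => ∑ j, A i j) + A) *ᵥ x) = ∑ i, ∑ j, A i j * (x i + x j) ^ 2 := by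
  have hswap : ∑ i, ∑ j, A i j * x j ^ 2 = ∑ i, ∑ j, A i j * x i ^ 2 := by
    rw [sum_comm]
    exact sum_congr rfl fun i _ => sum_congr rfl fun j _ => by rw [hA.apply j i]
  have hform : x ⬝ᵥ (diagonal (fun i => ∑ j, A i j) + A) *ᵥ x
      = ∑ i, ∑ j, A i j * x i ^ 2 + ∑ i, ∑ j, A i j * x i * x j := by
    rw [add_mulVec, dotProduct_add]
    congr 1
    · simp only [dotProduct, mulVec_diagonal, sum_mul, mul_sum]
      exact sum_congr rfl fun i _ => sum_congr rfl fun j _ => by ring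
    · simp only [dotProduct, mulVec, mul_sum]
      exact sum_congr rfl fun i _ => sum_congr rfl fun j _ => by ring
  calc 2 * (x ⬝ᵥ (diagonal (fun i => ∑ j, A i j) + A) *ᵥ x)
      = ∑ i, ∑ j, A i j * x i ^ 2 + ∑ i, ∑ j, A i j * x j ^ 2
          + 2 * ∑ i, ∑ j, A i j * x i * x j := by
        rw [hform, hswap]
        ring
    _ = ∑ i, ∑ j, A i j * (x i + x j) ^ 2 := by
        simp only [mul_sum, ← sum_add_distrib]
        exact sum_congr rfl fun i _ => sum_congr rfl fun j _ => by ring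

/-- Keeps only the terms of row and column `u` in `2 xᵀ Q x = ∑ᵢⱼ Aᵢⱼ (xᵢ + xⱼ)²`. -/
lemma Matrix.IsSymm.sq_mul_sum_row_le_dotProduct_mulVec (hA : A.IsSymm)
    (hnonneg : ∀ i j, 0 ≤ A i j) {u : ι} (hu : A u u = 0) {x : ι → ℝ}
    (hx : ∀ j, A u j ≠ 0 → x j = 1) :
    (x u + 1) ^ 2 * ∑ j, A u j ≤ x ⬝ᵥ (diagonal (fun i => ∑ j, A i j) + A) *ᵥ x := by
  have hrow : ∑ j, A u j * (x u + x j) ^ 2 = (x u + 1) ^ 2 * ∑ j, A u j := by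
    rw [mul_sum]
    refine sum_congr rfl fun j _ => ?_
    by_cases hj : A u j = 0
    · simp [hj]
    · rw [hx j hj, mul_comm]
  have := two_mul_sum_row_le_sum_sum (f := fun i j => A i j * (x i + x j) ^ 2)
    (fun i j => mul_nonneg (hnonneg i j) (sq_nonneg _))
    (fun i j => by rw [hA.apply i j, add_comm]) (u := u) (by simp [hu])
  rw [← hA.two_mul_dotProduct_diagonal_add_mulVec, hrow] at this
  linarith

end Spectrum

section QMax

variable {n : ℕ} {A : Matrix (Fin n) (Fin n) ℝ}

lemma Matrix.IsHermitian.qmax_eq_iSup (hA : A.IsHermitian) : qmax A = ⨆ i, hA.eigenvalues i := by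
  rw [qmax, hA.spectrum_real_eq_range_eigenvalues]
  rfl

lemma Matrix.IsHermitian.qmin_eq_iInf (hA : A.IsHermitian) : qmin A = ⨅ i, hA.eigenvalues i := by
  rw [qmin, hA.spectrum_real_eq_range_eigenvalues]
  rfl

lemma Matrix.IsHermitian.card_mul_qmax_sub_trace_le (hA : A.IsHermitian) (hn : 1 ≤ n) :
    n * qmax A - A.trace ≤ (n - 1) * (qmax A - qmin A) := by
  have : Nonempty (Fin n) := ⟨⟨0, hn⟩⟩
  have := card_mul_iSup_sub_sum_le hA.eigenvalues
  have htrace : A.trace = ∑ i, hA.eigenvalues i := by simpa using hA.trace_eq_sum_eigenvalues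
  rwa [Fintype.card_fin, ← hA.qmax_eq_iSup, ← hA.qmin_eq_iInf, ← htrace] at this

lemma Matrix.IsHermitian.dotProduct_mulVec_le_qmax_mul (hA : A.IsHermitian) (x : Fin n → ℝ) :
    x ⬝ᵥ A *ᵥ x ≤ qmax A * (x ⬝ᵥ x) :=
  hA.dotProduct_mulVec_le_of_spectrum_le (fun _ hμ => le_csSup finite_real_spectrum.bddAbove hμ) x

end QMax

section StarVector

variable {ι : Type*} [DecidableEq ι]

def starVector (u : ι) (N : Finset ι) (a : ℝ) : ι → ℝ :=
  fun j => if j = u then a else if j ∈ N then 1 else 0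

variable {u : ι} {N : Finset ι} {a : ℝ}

@[simp] lemma starVector_self : starVector u N a u = a := if_pos rfl

lemma starVector_of_mem (hu : u ∉ N) {j : ι} (hj : j ∈ N) : starVector u N a j = 1 := by
  simp [starVector, hj, ne_of_mem_of_not_mem hj hu]

lemma starVector_dotProduct_self [Fintype ι] (hu : u ∉ N) :
    starVector u N a ⬝ᵥ starVector u N a = a ^ 2 + #N := by
  have hsupp : ∀ j ∉ insert u N, starVector u N a j * starVector u N a j = 0 := fun j hj => by
    rw [mem_insert, not_or] at hj
    simp [starVector, hj.1, hj.2]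
  rw [dotProduct, ← sum_subset (subset_univ _) fun j _ => hsupp j, sum_insert hu,
    sum_congr rfl fun j hj => by rw [starVector_of_mem hu hj, mul_one], sum_const,
    nsmul_one, starVector_self, sq]

end StarVector

section Hypergraph

variable {n k : ℕ} {E : Finset (Finset (Fin n))}

lemma mem_neighbors {i j : Fin n} : j ∈ neighbors E i ↔ Adj E i j := by
  simp [neighbors]

lemma self_notMem_neighbors (i : Fin n) : i ∉ neighbors E i := by
  simp [mem_neighbors, Adj]

lemma adjMat_apply (i j : Fin n) :
    adjMat E i j = ∑ e ∈ E with i ∈ e, if j ∈ e.erase i then 1 / ((#e : ℝ) - 1) else 0 := by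
  simp only [adjMat, edgesBetween, of_apply, sum_filter, mem_erase]
  split_ifs with h
  · subst h
    simp
  · refine sum_congr rfl fun e _ => ?_
    by_cases hi : i ∈ e <;> by_cases hj : j ∈ e <;> simp [hi, hj, Ne.symm h]

lemma adjMat_apply_self (i : Fin n) : adjMat E i i = 0 := by
  simp [adjMat]

lemma adjMat_isSymm : (adjMat E).IsSymm := by
  refine IsSymm.ext fun i j => ?_
  simp only [adjMat, edgesBetween, of_apply, eq_comm (a := j), and_comm (a := j ∈ _)]

lemma adjMat_nonneg (i j : Fin n) : 0 ≤ adjMat E i j := by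
  rw [adjMat_apply]
  refine sum_nonneg fun e he => ?_
  split_ifs
  · have : (1 : ℝ) ≤ #e := Nat.one_le_cast.2 (card_pos.2 ⟨i, (mem_filter.1 he).2⟩)
    exact one_div_nonneg.2 (sub_nonneg.2 this)
  · exact le_rfl

lemma mem_neighbors_of_adjMat_ne_zero {i j : Fin n} (h : adjMat E i j ≠ 0) :
    j ∈ neighbors E i := by
  rw [adjMat_apply] at h
  obtain ⟨e, he, hne⟩ := exists_ne_zero_of_sum_ne_zero h
  obtain ⟨heE, hie⟩ := mem_filter.1 he
  obtain ⟨hji, hje⟩ := mem_erase.1 (by by_contra hj; exact hne (if_neg hj))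
  exact mem_neighbors.2 ⟨Ne.symm hji, e, heE, hie, hje⟩

lemma sum_adjMat_row (hE : ∀ e ∈ E, #e ≠ 1) (i : Fin n) : ∑ j, adjMat E i j = hdeg E i := by
  have hedge : ∀ e ∈ E.filter (i ∈ ·),
      ∑ j, (if j ∈ e.erase i then 1 / ((#e : ℝ) - 1) else 0) = 1 := fun e he => by
    obtain ⟨heE, hie⟩ := mem_filter.1 he
    have hcard : (#e : ℝ) - 1 ≠ 0 :=
      sub_ne_zero.2 (by exact_mod_cast hE e heE)
    rw [sum_ite_mem, univ_inter, sum_const, card_erase_of_mem hie, nsmul_eq_mul,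
      Nat.cast_pred (card_pos.2 ⟨i, hie⟩), mul_one_div_cancel hcard]
  simp only [adjMat_apply]
  rw [sum_comm, sum_congr rfl hedge, sum_const, nsmul_one, hdeg]

lemma card_neighbors_le (hU : IsUniform k E) (i : Fin n) :
    #(neighbors E i) ≤ hdeg E i * (k - 1) := by
  have hsub : neighbors E i ⊆ (E.filter (i ∈ ·)).biUnion (·.erase i) := fun j hj => by
    obtain ⟨hij, e, he, hie, hje⟩ := mem_neighbors.1 hj
    exact mem_biUnion.2 ⟨e, mem_filter.2 ⟨he, hie⟩, mem_erase.2 ⟨Ne.symm hij, hje⟩⟩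
  calc #(neighbors E i)
      ≤ ∑ e ∈ E.filter (i ∈ ·), #(e.erase i) := (card_le_card hsub).trans card_biUnion_le
    _ = ∑ _e ∈ E.filter (i ∈ ·), (k - 1) := sum_congr rfl fun e he => by
        rw [card_erase_of_mem (mem_filter.1 he).2, hU e (mem_filter.1 he).1]
    _ = hdeg E i * (k - 1) := by rw [sum_const, smul_eq_mul, hdeg]

lemma sum_hdeg (hU : IsUniform k E) : ∑ i, hdeg E i = k * #E := by
  have := sum_card_bipartiteAbove_eq_sum_card_bipartiteBelow (s := univ) (t := E)
    (r := fun i e => i ∈ e)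
  simp only [bipartiteAbove, bipartiteBelow, filter_mem_eq_inter, univ_inter] at this
  unfold hdeg
  rw [this, sum_congr rfl hU, sum_const, smul_eq_mul, mul_comm]

lemma signlessLap_eq (hE : ∀ e ∈ E, #e ≠ 1) :
    signlessLap E = diagonal (fun i => ∑ j, adjMat E i j) + adjMat E := by
  simp only [signlessLap, sum_adjMat_row hE]

lemma signlessLap_isHermitian : (signlessLap E).IsHermitian :=
  (isHermitian_diagonal_of_self_adjoint _ (by simp [IsSelfAdjoint])).add adjMat_isSymm

lemma trace_signlessLap (hU : IsUniform k E) : (signlessLap E).trace = k * #E := by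
  simp only [trace, signlessLap, diag_apply, Matrix.add_apply, diagonal_apply_eq,
    adjMat_apply_self, add_zero]
  exact_mod_cast sum_hdeg hU

lemma hdeg_pos {e : Finset (Fin n)} (he : e ∈ E) {i : Fin n} (hi : i ∈ e) : 0 < hdeg E i :=
  card_pos.2 ⟨e, mem_filter.2 ⟨he, hi⟩⟩

theorem hdeg_add_inv_le_qmax_signlessLap (hk : 2 ≤ k) (hU : IsUniform k E) {u : Fin n}
    (hu : 1 ≤ hdeg E u) : (hdeg E u : ℝ) + 1 / ((k : ℝ) - 1) ≤ qmax (signlessLap E) := by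
  set d : ℝ := (hdeg E u : ℝ)
  set q := qmax (signlessLap E)
  have hk1 : (0 : ℝ) < k - 1 := by
    have : (2 : ℝ) ≤ k := by exact_mod_cast hk
    linarith
  have hd : (1 : ℝ) ≤ d := Nat.one_le_cast.2 hu
  set c := d * (k - 1)
  have hc : 0 < c := by positivity
  set N := neighbors E u
  have hN : (#N : ℝ) ≤ c := by
    have := card_neighbors_le hU u
    have h1 : 1 ≤ k := by omega
    simp only [c, d]
    exact_mod_cast this
  have hquad : d * (c + 1) ^ 2 ≤ starVector u N c ⬝ᵥ signlessLap E *ᵥ starVector u N c := by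
    have hE : ∀ e ∈ E, #e ≠ 1 := fun e he => by rw [hU e he]; omega
    have := adjMat_isSymm.sq_mul_sum_row_le_dotProduct_mulVec adjMat_nonneg (adjMat_apply_self u)
      (x := starVector u N c) fun j hj => starVector_of_mem (self_notMem_neighbors u)
        (mem_neighbors_of_adjMat_ne_zero hj)
    rwa [starVector_self, sum_adjMat_row hE, mul_comm, ← signlessLap_eq hE] at this
  have hray := (signlessLap_isHermitian (E := E)).dotProduct_mulVec_le_qmax_mul (starVector u N c)
  rw [starVector_dotProduct_self (self_notMem_neighbors u)] at hray
  have hq : 0 < q := by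
    by_contra! hq
    nlinarith [mul_nonpos_of_nonpos_of_nonneg hq (by positivity : (0 : ℝ) ≤ c ^ 2 + #N)]
  have hkey : d * (c + 1) ^ 2 ≤ q * (c * (c + 1)) := by nlinarith
  calc d + 1 / ((k : ℝ) - 1) = d * (c + 1) ^ 2 / (c * (c + 1)) := by
        field_simp
        ring
    _ ≤ q := by rw [div_le_iff₀ (by positivity)]; exact hkey

end Hypergraph

theorem stmt_16 (n k : ℕ) (hn : 2 ≤ n) (hk : 2 ≤ k) (E : Finset (Finset (Fin n)))
    (hU : IsUniform k E) (hm : 1 ≤ E.card) :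
    qmax (signlessLap E) - qmin (signlessLap E) ≥
      ((n : ℝ) * ((⨆ i : Fin n, (hdeg E i : ℝ)) + 1 / ((k : ℝ) - 1))
          - (k : ℝ) * E.card) / ((n : ℝ) - 1) := by
  have : Nonempty (Fin n) := ⟨⟨0, by omega⟩⟩
  obtain ⟨u, hu⟩ := exists_eq_ciSup_of_finite (f := fun i : Fin n => (hdeg E i : ℝ))
  have hdeg_le (i : Fin n) : (hdeg E i : ℝ) ≤ hdeg E u :=
    hu ▸ le_ciSup (Finite.bddAbove_range fun i => (hdeg E i : ℝ)) i
  have hdu : 1 ≤ hdeg E u := by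
    obtain ⟨e, he⟩ := card_pos.1 (by omega : 0 < #E)
    obtain ⟨i, hi⟩ := card_pos.1 (by rw [hU e he]; omega : 0 < #e)
    exact (hdeg_pos he hi).trans_le (by exact_mod_cast hdeg_le i)
  have hqmax := hdeg_add_inv_le_qmax_signlessLap hk hU hdu
  have hspread := signlessLap_isHermitian.card_mul_qmax_sub_trace_le (A := signlessLap E) (by omega)
  rw [trace_signlessLap hU] at hspread
  have hn1 : (0 : ℝ) < n - 1 := by
    have : (2 : ℝ) ≤ n := by exact_mod_cast hn
    linarith
  rw [← hu, ge_iff_le, div_le_iff₀ hn1]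
  nlinarith
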